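/- Let n ≥ 2, k ≥ 2, and fix any orientation section σ. Then the image of p←_k − p→_k : M_k → M_{k−1} equals the set of vectors in M_{k−1} whose sum of coordinates is even; consequently the cokernel of p←_k − p→_k is isomorphic to ℤ/2ℤ. -/

import Mathlib

open List

/-- A letter of the free group `F_n`: a generator index together with a sign. -/
abbrev Letter (n : ℕ) := Fin n × Bool

/-- The inverse of a letter. -/
def linv {n : ℕ} (a : Letter n) : Letter n := (a.1, !a.2)

@[simp] lemma linv_linv {n : ℕ} (a : Letter n) : linv (linv a) = a := by
  cases a with
  | mk x b => simp [linv]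

/-- The (formal) inverse of a word. -/
def wInv {n : ℕ} (w : List (Letter n)) : List (Letter n) := (w.map linv).reverse

@[simp] lemma wInv_wInv {n : ℕ} (w : List (Letter n)) : wInv (wInv w) = w := by
  simp [wInv, Function.comp_def]

/-- A word is reduced if no two consecutive letters are mutually inverse. -/
def Reduced {n : ℕ} (w : List (Letter n)) : Prop :=
  List.Chain' (fun a b => b ≠ linv a) w

/-- A word is cyclically reduced if it is reduced and its first and last letters
are not mutually inverse. -/
def CyclicallyReduced {n : ℕ} (w : List (Letter n)) : Prop :=
  Reduced w ∧ ∀ a b, w.head? = some a → w.getLast? = some b → a ≠ linv b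

/-- `lpow l m` is the `m`-fold concatenation of the list `l` with itself. -/
def lpow {α : Type*} (l : List α) : ℕ → List α
  | 0 => []
  | m + 1 => l ++ lpow l m

/-- The number of oriented occurrences of `u` in the cyclic word represented by `w`. -/
def orientedOcc {n : ℕ} (u w : List (Letter n)) : ℕ :=
  ((Finset.range w.length).filter (fun i => u <+: lpow (w.rotate i) (u.length + 1))).card

/-- `occ u w` : occurrences of the unoriented word `{u, u⁻¹}` in the cyclic word
represented by `w`. -/
def occ {n : ℕ} (u w : List (Letter n)) : ℕ :=
  orientedOcc u w + orientedOcc (wInv u) w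

lemma occ_wInv {n : ℕ} (u w : List (Letter n)) : occ (wInv u) w = occ u w := by
  simp [occ, wInv_wInv, Nat.add_comm]

/-- Occurrences of `u` as a contiguous factor of `w`. -/
def factOcc {n : ℕ} (u w : List (Letter n)) : ℕ :=
  ((Finset.range (w.length + 1)).filter (fun i => u <+: w.drop i)).card

/-- `occf u w` : occurrences of `{u, u⁻¹}` as a contiguous factor of `w`. -/
def occf {n : ℕ} (u w : List (Letter n)) : ℕ := factOcc u w + factOcc (wInv u) w

/-- Two cyclically reduced words represent the same cyclic word iff one is a
rotation of the other or of its inverse. -/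
def SameCyclicWord {n : ℕ} (v w : List (Letter n)) : Prop :=
  (∃ i, w = v.rotate i) ∨ (∃ i, w = (wInv v).rotate i)

/-- Cyclic reduction: repeatedly delete the first and last letter while they are
mutually inverse. -/
def cyclicReduce {n : ℕ} : List (Letter n) → List (Letter n)
  | [] => []
  | a :: rest =>
    if rest.getLast? = some (linv a) then cyclicReduce rest.dropLast
    else a :: rest
  termination_by w => w.length
  decreasing_by simp [List.length_dropLast]

/-- Oriented reduced words of length `k`. -/
structure RW (n k : ℕ) where
  val : List (Letter n)
  red : Reduced val
  len : val.length = k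

instance (n k : ℕ) : DecidableEq (RW n k) := fun a b =>
  decidable_of_iff (a.val = b.val)
    ⟨fun h => by cases a; cases b; cases h; rfl, fun h => congrArg RW.val h⟩

/-- Identify a reduced word with its inverse: the quotient is the set `W_k` of
unoriented words of length `k`. -/
instance uwSetoid (n k : ℕ) : Setoid (RW n k) where
  r u v := v.val = u.val ∨ v.val = wInv u.val
  iseqv := by
    refine ⟨fun u => Or.inl rfl, ?_, ?_⟩
    · rintro u v (h | h)
      · exact Or.inl h.symm
      · exact Or.inr (by rw [h, wInv_wInv])
    · rintro u v w (h1 | h1) (h2 | h2)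
      · exact Or.inl (h2.trans h1)
      · exact Or.inr (h2.trans (congrArg wInv h1))
      · exact Or.inr (h2.trans h1)
      · exact Or.inl (by rw [h2, h1, wInv_wInv])

instance (n k : ℕ) : ∀ a b : RW n k, Decidable (a ≈ b) := fun a b =>
  show Decidable (b.val = a.val ∨ b.val = wInv a.val) from inferInstance

/-- `W_k` : unoriented reduced words of length `k`. -/
abbrev UW (n k : ℕ) := Quotient (uwSetoid n k)

def toVec (n k : ℕ) (u : RW n k) : List.Vector (Letter n) k := ⟨u.val, u.len⟩

lemma toVec_inj (n k : ℕ) : Function.Injective (toVec n k) := by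
  intro a b h
  have h' : a.val = b.val := congrArg Subtype.val h
  cases a; cases b; cases h'; rfl

noncomputable instance (n k : ℕ) : Fintype (RW n k) :=
  Fintype.ofInjective _ (toVec_inj n k)

noncomputable example (n k : ℕ) : Fintype (UW n k) := inferInstance
noncomputable example (n k : ℕ) : DecidableEq (UW n k) := inferInstance

/-- `M_k` : the free ℤ-module on `W_k`, realized as functions `W_k → ℤ`. -/
abbrev Mk (n k : ℕ) := UW n k → ℤ

/-- `π_k` of the cyclic word represented by `w` : the vector of occurrence counts
of unoriented words of length `k`. -/
def pik (n k : ℕ) (w : List (Letter n)) : Mk n k :=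
  Quotient.lift (fun u : RW n k => (occ u.val w : ℤ)) (by
    intro a b hab
    have h : occ a.val w = occ b.val w := by
      rcases hab with h | h
      · rw [h]
      · rw [h, occ_wInv]
    show ((occ a.val w : ℕ) : ℤ) = ((occ b.val w : ℕ) : ℤ)
    rw [h])

lemma Reduced.drop' {n : ℕ} {w : List (Letter n)} (h : Reduced w) (m : ℕ) :
    Reduced (w.drop m) :=
  List.IsChain.suffix h (List.drop_suffix m w)

lemma Reduced.dropLast' {n : ℕ} {w : List (Letter n)} (h : Reduced w) :
    Reduced w.dropLast :=
  List.IsChain.prefix h (List.dropLast_prefix w)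

/-- The unoriented `(k-1)`-suffix of an oriented word of length `k`. -/
def sufC {n k : ℕ} (w : RW n k) : UW n (k - 1) :=
  Quotient.mk (uwSetoid n (k - 1)) ⟨w.val.drop 1, w.red.drop' 1, by simp [w.len]⟩

/-- The unoriented `(k-1)`-prefix of an oriented word of length `k`. -/
def preC {n k : ℕ} (w : RW n k) : UW n (k - 1) :=
  Quotient.mk (uwSetoid n (k - 1)) ⟨w.val.dropLast, w.red.dropLast', by simp [w.len]⟩

/-- Matrix of `p←_k` w.r.t. the orientation section `σ`: a basis element `w̄` of `M_k`
is sent to the sum of the unoriented `(k-1)`-words at its outward-pointing ends. -/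
noncomputable def AOut (n k : ℕ) (σ : List (Letter n) → List (Letter n)) :
    Matrix (UW n (k - 1)) (UW n k) ℤ := fun ub wb =>
  ∑ w : RW n k,
    if Quotient.mk (uwSetoid n k) w = wb ∧ σ w.val = w.val then
      ((if sufC w = ub ∧ σ (w.val.drop 1) = w.val.drop 1 then 1 else 0) +
       (if preC w = ub ∧ σ (w.val.dropLast) = wInv (w.val.dropLast) then 1 else 0))
    else 0

/-- Matrix of `p→_k` : inward-pointing ends. -/
noncomputable def AIn (n k : ℕ) (σ : List (Letter n) → List (Letter n)) :
    Matrix (UW n (k - 1)) (UW n k) ℤ := fun ub wb =>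
  ∑ w : RW n k,
    if Quotient.mk (uwSetoid n k) w = wb ∧ σ w.val = w.val then
      ((if sufC w = ub ∧ σ (w.val.drop 1) = wInv (w.val.drop 1) then 1 else 0) +
       (if preC w = ub ∧ σ (w.val.dropLast) = w.val.dropLast then 1 else 0))
    else 0

/-- `p←_k : M_k → M_{k-1}`. -/
noncomputable def pOut (n k : ℕ) (σ : List (Letter n) → List (Letter n)) :
    Mk n k →ₗ[ℤ] Mk n (k - 1) := (AOut n k σ).mulVecLin

/-- `p→_k : M_k → M_{k-1}`. -/
noncomputable def pIn (n k : ℕ) (σ : List (Letter n) → List (Letter n)) :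
    Mk n k →ₗ[ℤ] Mk n (k - 1) := (AIn n k σ).mulVecLin


/-!
Write `e(u) = ±[u]` for the basis vector of the unoriented word of `u`, with sign `+` iff `σ`
picks the orientation `u`. For the orientation `w` of a `k`-word picked by `σ`, the column of
`p← - p→` at `[w]` is `e(suffix w) - e(prefix w)`, which has even coordinate sum. Conversely,
since `n ≥ 2`, any two reduced `(k-1)`-words `u`, `v` can be glued to a reduced word `u t v`; the
columns of its `k`-windows telescope to `e(v) - e(u)`, and `v = u⁻¹` gives `2 [u]`. These vectors
span the even-sum lattice, whose quotient is `ℤ/2ℤ` via the coordinate sum modulo `2`.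
-/

section Words

variable {n : ℕ}

lemma linv_ne_self (a : Letter n) : linv a ≠ a := by
  cases a
  simp [linv]

@[simp] lemma wInv_length (w : List (Letter n)) : (wInv w).length = w.length := by
  simp [wInv]

lemma wInv_dropLast (w : List (Letter n)) : wInv w.dropLast = (wInv w).drop 1 := by
  rw [wInv, wInv, List.drop_one, List.map_dropLast, List.tail_reverse]

lemma wInv_drop_one (w : List (Letter n)) : wInv (w.drop 1) = (wInv w).dropLast := by
  simpa using (congrArg wInv (wInv_dropLast (wInv w))).symm

lemma getElem_wInv (w : List (Letter n)) (i : ℕ) (hi : i < (wInv w).length) :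
    (wInv w)[i] = linv (w[w.length - 1 - i]'(by simp at hi; omega)) := by
  simp [wInv]

lemma reduced_replicate (a : Letter n) (m : ℕ) : Reduced (List.replicate m a) :=
  List.isChain_replicate_of_rel m (linv_ne_self a).symm

namespace Reduced

variable {u v w : List (Letter n)}

lemma wInv (h : Reduced w) : Reduced (wInv w) := by
  rw [Reduced, List.Chain', _root_.wInv, List.isChain_reverse, List.isChain_map]
  refine h.imp fun a b hab => ?_
  simpa [linv_linv] using hab.symm

/-- If `w = w⁻¹` with `|w| = L`, then `w[i] = (w[L-1-i])⁻¹`; at the middle this says a letter is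
its own inverse (odd `L`) or two adjacent letters cancel (even `L`). -/
lemma ne_wInv (h : Reduced w) (hne : w ≠ []) : w ≠ _root_.wInv w := by
  intro he
  have hL : 0 < w.length := List.length_pos_iff.mpr hne
  have mirror : ∀ i (hi : i < w.length), w[i] = linv (w[w.length - 1 - i]'(by omega)) :=
    fun i hi => by rw [List.getElem_of_eq he hi, getElem_wInv]
  set i := (w.length - 1) / 2
  obtain hmid | hmid : w.length - 1 - i = i ∨ w.length - 1 - i = i + 1 := by omega
  · have := mirror i (by omega)
    simp only [hmid] at this
    exact linv_ne_self _ this.symm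
  · have hcancel := mirror i (by omega)
    simp only [hmid] at hcancel
    exact List.isChain_iff_getElem.mp h i (by omega) (by rw [hcancel, linv_linv])

lemma append_cons (hu : Reduced u) (hv : Reduced v) {t : Letter n}
    (hut : ∀ a ∈ u.getLast?, t ≠ linv a) (htv : ∀ b ∈ v.head?, t ≠ linv b) :
    Reduced (u ++ t :: v) := by
  rw [Reduced, List.Chain', List.isChain_append, List.isChain_cons]
  refine ⟨hu, ⟨fun b hb h => htv b hb (by rw [h, linv_linv]), hv⟩, ?_⟩
  rintro a ha _ ⟨⟩
  exact hut a ha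

end Reduced

lemma exists_letter_ne (hn : 2 ≤ n) (a b : Letter n) : ∃ t : Letter n, t ≠ a ∧ t ≠ b := by
  have hcard : ({a, b} : Finset (Letter n)).card < (Finset.univ : Finset (Letter n)).card := by
    calc ({a, b} : Finset (Letter n)).card ≤ 2 := Finset.card_le_two
      _ < Fintype.card (Letter n) := by simp; omega
  obtain ⟨t, -, ht⟩ := Finset.exists_mem_notMem_of_card_lt_card hcard
  simp only [Finset.mem_insert, Finset.mem_singleton, not_or] at ht
  exact ⟨t, ht⟩

lemma exists_reduced_append_cons (hn : 2 ≤ n) {u v : List (Letter n)} (hu : Reduced u)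
    (hv : Reduced v) (hu0 : u ≠ []) (hv0 : v ≠ []) : ∃ t, Reduced (u ++ t :: v) := by
  obtain ⟨t, hta, htb⟩ := exists_letter_ne hn (linv (u.getLast hu0)) (linv (v.head hv0))
  refine ⟨t, hu.append_cons hv ?_ ?_⟩
  · simpa [List.getLast?_eq_some_getLast hu0] using hta
  · simpa [List.head?_eq_some_head hv0] using htb

end Words

namespace RW

variable {n m k : ℕ}

lemma ext {u v : RW n m} (h : u.val = v.val) : u = v := by
  cases u; cases v; cases h; rfl

def inv (u : RW n m) : RW n m := ⟨wInv u.val, u.red.wInv, by simp [u.len]⟩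

@[simp] lemma mk_inv (u : RW n m) : (⟦u.inv⟧ : UW n m) = ⟦u⟧ :=
  Quotient.sound (Or.inr (wInv_wInv u.val).symm)

lemma val_ne_wInv (u : RW n m) (hm : m ≠ 0) : u.val ≠ wInv u.val :=
  u.red.ne_wInv fun h => hm (by simpa [h] using u.len.symm)

def tail (w : RW n k) : RW n (k - 1) := ⟨w.val.drop 1, w.red.drop' 1, by simp [w.len]⟩

def dropLast (w : RW n k) : RW n (k - 1) := ⟨w.val.dropLast, w.red.dropLast', by simp [w.len]⟩

lemma inv_tail (w : RW n k) : w.inv.tail = w.dropLast.inv := ext (wInv_dropLast w.val).symm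

lemma inv_dropLast (w : RW n k) : w.inv.dropLast = w.tail.inv := ext (wInv_drop_one w.val).symm

end RW

lemma UW.nonempty {n : ℕ} (hn : 0 < n) (m : ℕ) : Nonempty (UW n m) :=
  ⟨⟦⟨List.replicate m (⟨0, hn⟩, true), reduced_replicate _ m, List.length_replicate⟩⟧⟩

structure IsOrientationSection {n : ℕ} (σ : List (Letter n) → List (Letter n)) : Prop where
  eq_or_eq_wInv : ∀ u, σ u = u ∨ σ u = wInv u
  map_wInv : ∀ u, σ (wInv u) = σ u

def orientSign {n : ℕ} (σ : List (Letter n) → List (Letter n)) (u : List (Letter n)) : ℤ :=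
  if σ u = u then 1 else -1

noncomputable def signedBasis {n m : ℕ} (σ : List (Letter n) → List (Letter n)) (u : RW n m) :
    Mk n m :=
  Pi.single ⟦u⟧ (orientSign σ u.val)

lemma signedBasis_of_eq {n m : ℕ} {σ : List (Letter n) → List (Letter n)} {u : RW n m}
    (hu : σ u.val = u.val) : signedBasis σ u = Pi.single ⟦u⟧ 1 := by
  rw [signedBasis, orientSign, if_pos hu]

namespace IsOrientationSection

variable {n m k : ℕ} {σ : List (Letter n) → List (Letter n)} (hσ : IsOrientationSection σ)
include hσ

lemma orientSign_wInv {u : List (Letter n)} (hu : u ≠ wInv u) :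
    orientSign σ (wInv u) = -orientSign σ u := by
  rcases hσ.eq_or_eq_wInv u with h | h
  · have : σ (wInv u) ≠ wInv u := by rw [hσ.map_wInv, h]; exact hu
    simp [orientSign, h, this]
  · simp [orientSign, hσ.map_wInv, h, hu.symm]

lemma signedBasis_inv (hm : m ≠ 0) (u : RW n m) : signedBasis σ u.inv = -signedBasis σ u := by
  rw [signedBasis, signedBasis, RW.mk_inv, ← Pi.single_neg, RW.inv,
    hσ.orientSign_wInv (u.val_ne_wInv hm)]

lemma exists_rep (c : UW n m) : ∃ u : RW n m, ⟦u⟧ = c ∧ σ u.val = u.val := by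
  obtain ⟨u, rfl⟩ := Quotient.exists_rep c
  rcases hσ.eq_or_eq_wInv u.val with h | h
  · exact ⟨u, rfl, h⟩
  · exact ⟨u.inv, u.mk_inv, by rw [RW.inv, hσ.map_wInv, h]⟩

lemma rep_unique {u v : RW n m} (huv : (⟦u⟧ : UW n m) = ⟦v⟧) (hu : σ u.val = u.val)
    (hv : σ v.val = v.val) : u = v := by
  rcases Quotient.exact huv with h | h
  · exact RW.ext h.symm
  · exact RW.ext (by rw [← hu, ← hv, h, hσ.map_wInv])

lemma ite_sub_ite {u : List (Letter n)} (hu : u ≠ wInv u) (p : Prop) [Decidable p] :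
    ((if p ∧ σ u = u then 1 else 0) - (if p ∧ σ u = wInv u then 1 else 0) : ℤ) =
      if p then orientSign σ u else 0 := by
  have := hu.symm
  rcases hσ.eq_or_eq_wInv u with h | h <;> by_cases p <;> simp_all [orientSign]


lemma sum_ite_oriented {w : RW n k} (hw : σ w.val = w.val) (F : RW n k → ℤ) :
    ∑ w' : RW n k, (if (⟦w'⟧ : UW n k) = ⟦w⟧ ∧ σ w'.val = w'.val then F w' else 0) = F w := by
  rw [Finset.sum_eq_single_of_mem w (Finset.mem_univ w) fun w' _ hne =>
    if_neg fun ⟨hmk, hw'⟩ => hne (hσ.rep_unique hmk hw' hw), if_pos ⟨rfl, hw⟩]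

lemma pOut_sub_pIn_single (hk : 2 ≤ k) {w : RW n k} (hw : σ w.val = w.val) :
    (pOut n k σ - pIn n k σ) (Pi.single ⟦w⟧ 1) =
      signedBasis σ w.tail - signedBasis σ w.dropLast := by
  ext ub
  have hk1 : k - 1 ≠ 0 := by omega
  have htail : w.val.drop 1 ≠ wInv (w.val.drop 1) := w.tail.val_ne_wInv hk1
  have hinit : w.val.dropLast ≠ wInv w.val.dropLast := w.dropLast.val_ne_wInv hk1
  simp only [LinearMap.sub_apply, Pi.sub_apply, pOut, pIn, Matrix.mulVecLin_apply,
    Matrix.mulVec_single_one, Matrix.col_apply, AOut, AIn, hσ.sum_ite_oriented hw]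
  rw [add_sub_add_comm, ← sub_neg_eq_add, neg_sub, hσ.ite_sub_ite htail, hσ.ite_sub_ite hinit]
  simp only [signedBasis, Pi.single_apply, sufC, preC, eq_comm (a := ub)]
  rfl

lemma signedBasis_tail_sub_dropLast_mem_range (hk : 2 ≤ k) (w : RW n k) :
    signedBasis σ w.tail - signedBasis σ w.dropLast ∈ LinearMap.range (pOut n k σ - pIn n k σ) := by
  rcases hσ.eq_or_eq_wInv w.val with hw | hw
  · exact ⟨_, hσ.pOut_sub_pIn_single hk hw⟩
  · have hwi : σ w.inv.val = w.inv.val := by rw [RW.inv, hσ.map_wInv, hw]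
    have hk1 : k - 1 ≠ 0 := by omega
    refine ⟨_, (hσ.pOut_sub_pIn_single hk hwi).trans ?_⟩
    rw [w.inv_tail, w.inv_dropLast, hσ.signedBasis_inv hk1, hσ.signedBasis_inv hk1]
    abel


/-- Summing the boundaries of the `k`-windows of `L` telescopes to the difference of its last
and first `(k-1)`-windows. -/
lemma signedBasis_sub_mem_range_of_reduced (hk : 2 ≤ k) {L : List (Letter n)} (hL : Reduced L)
    (hlen : k - 1 ≤ L.length) {a b : RW n (k - 1)} (ha : a.val = L.drop (L.length - (k - 1)))
    (hb : b.val = L.take (k - 1)) :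
    signedBasis σ a - signedBasis σ b ∈ LinearMap.range (pOut n k σ - pIn n k σ) := by
  induction L generalizing b with
  | nil => simp at hlen; omega
  | cons c L ih =>
    rw [List.length_cons] at ha hlen
    obtain heq | hle : L.length + 1 = k - 1 ∨ k - 1 ≤ L.length := by omega
    · rw [RW.ext (u := a) (v := b) (by rw [ha, hb, heq, Nat.sub_self, List.drop_zero, ← heq,
        ← List.length_cons, List.take_length]), sub_self]
      exact zero_mem _
    · let W : RW n k := ⟨(c :: L).take k, List.IsChain.take hL k, by simp; omega⟩
      have ha' : a.val = L.drop (L.length - (k - 1)) := by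
        rw [ha, Nat.sub_add_comm hle, List.drop_succ_cons]
      have hWtail : W.tail.val = L.take (k - 1) := by
        change ((c :: L).take k).drop 1 = _
        rw [List.take_cons (by omega), List.drop_one, List.tail_cons]
      have hWinit : W.dropLast = b := RW.ext (by
        change ((c :: L).take k).dropLast = _
        rw [hb, List.dropLast_eq_take, List.take_take, List.length_take]
        congr 1
        simp only [List.length_cons]
        omega)
      have := add_mem (ih (hL.drop' 1) hle ha' hWtail)
        (hσ.signedBasis_tail_sub_dropLast_mem_range hk W)
      rwa [sub_add_sub_cancel, hWinit] at this

lemma signedBasis_sub_mem_range (hn : 2 ≤ n) (hk : 2 ≤ k) (a b : RW n (k - 1)) :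
    signedBasis σ a - signedBasis σ b ∈ LinearMap.range (pOut n k σ - pIn n k σ) := by
  have hne : ∀ u : RW n (k - 1), u.val ≠ [] := fun u h => by
    have := u.len
    simp only [h, List.length_nil] at this
    omega
  obtain ⟨t, ht⟩ := exists_reduced_append_cons hn b.red a.red (hne b) (hne a)
  refine hσ.signedBasis_sub_mem_range_of_reduced hk ht (by simp [a.len]; omega) ?_
    (List.take_left' b.len).symm
  simp only [List.length_append, List.length_cons, a.len, b.len]
  rw [List.append_cons, List.drop_left' (by simp [b.len])]

lemma single_sub_single_mem_range (hn : 2 ≤ n) (hk : 2 ≤ k) (c d : UW n (k - 1)) :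
    Pi.single c 1 - Pi.single d 1 ∈ LinearMap.range (pOut n k σ - pIn n k σ) := by
  obtain ⟨u, rfl, hu⟩ := hσ.exists_rep c
  obtain ⟨v, rfl, hv⟩ := hσ.exists_rep d
  simpa only [signedBasis_of_eq hu, signedBasis_of_eq hv] using
    hσ.signedBasis_sub_mem_range hn hk u v

lemma single_two_mem_range (hn : 2 ≤ n) (hk : 2 ≤ k) (c : UW n (k - 1)) :
    Pi.single c 2 ∈ LinearMap.range (pOut n k σ - pIn n k σ) := by
  obtain ⟨u, rfl, hu⟩ := hσ.exists_rep c
  have := hσ.signedBasis_sub_mem_range hn hk u u.inv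
  rwa [hσ.signedBasis_inv (by omega), sub_neg_eq_add, signedBasis_of_eq hu, ← Pi.single_add,
    one_add_one_eq_two] at this

end IsOrientationSection

section Parity

variable {ι : Type*} [Fintype ι]

variable (ι) in
def parity : (ι → ℤ) →ₗ[ℤ] ZMod 2 where
  toFun v := ((∑ i, v i : ℤ) : ZMod 2)
  map_add' v w := by simp [Finset.sum_add_distrib]
  map_smul' r v := by simp [Finset.mul_sum]

lemma mem_ker_parity {v : ι → ℤ} : v ∈ LinearMap.ker (parity ι) ↔ (2 : ℤ) ∣ ∑ i, v i :=
  ZMod.intCast_zmod_eq_zero_iff_dvd (∑ i, v i) 2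

lemma parity_single [DecidableEq ι] (i : ι) (z : ℤ) : parity ι (Pi.single i z) = z := by
  change ((∑ x, (Pi.single i z : ι → ℤ) x : ℤ) : ZMod 2) = z
  simp

lemma parity_surjective [Nonempty ι] : Function.Surjective (parity ι) := by
  classical
  intro z
  obtain ⟨z, rfl⟩ := ZMod.intCast_surjective z
  exact ⟨Pi.single (Classical.arbitrary ι) z, parity_single _ z⟩

lemma ker_parity_le [DecidableEq ι] {R : Submodule ℤ (ι → ℤ)}
    (hsub : ∀ i j, Pi.single i 1 - Pi.single j 1 ∈ R) (htwo : ∀ i, Pi.single i 2 ∈ R) :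
    LinearMap.ker (parity ι) ≤ R := by
  intro v hv
  rcases isEmpty_or_nonempty ι with hι | ⟨⟨j⟩⟩
  · rw [Subsingleton.elim v 0]
    exact R.zero_mem
  have hdecomp : v = ∑ i, v i • (Pi.single i 1 - Pi.single j 1) + Pi.single j (∑ i, v i) := by
    ext x
    by_cases hx : x = j <;>
      simp [Pi.single_apply, Finset.sum_apply, mul_sub, Finset.sum_sub_distrib, hx]
  obtain ⟨t, ht⟩ := mem_ker_parity.1 hv
  rw [hdecomp, ht, mul_comm, ← smul_eq_mul, Pi.single_smul']
  exact add_mem (sum_mem fun i _ => R.smul_mem _ (hsub i j)) (R.smul_mem _ (htwo j))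

end Parity

lemma parity_signedBasis {n m : ℕ} (σ : List (Letter n) → List (Letter n)) (u : RW n m) :
    parity (UW n m) (signedBasis σ u) = 1 := by
  rw [signedBasis, parity_single, orientSign]
  split_ifs <;> decide

lemma IsOrientationSection.range_pOut_sub_pIn {n k : ℕ} {σ : List (Letter n) → List (Letter n)}
    (hσ : IsOrientationSection σ) (hn : 2 ≤ n) (hk : 2 ≤ k) :
    LinearMap.range (pOut n k σ - pIn n k σ) = LinearMap.ker (parity (UW n (k - 1))) := by
  refine le_antisymm (LinearMap.range_le_ker_iff.2 ?_)
    (ker_parity_le (hσ.single_sub_single_mem_range hn hk) (hσ.single_two_mem_range hn hk))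
  refine LinearMap.pi_ext' fun wb => LinearMap.ext_ring ?_
  obtain ⟨w, rfl, hw⟩ := hσ.exists_rep wb
  simp [hσ.pOut_sub_pIn_single hk hw, parity_signedBasis]

/-- The image of `p←_k - p→_k` is the set of vectors of `M_{k-1}`
with even coordinate sum, and its cokernel is isomorphic to `ℤ/2ℤ`. -/
theorem range_and_coker (n k : ℕ) (hn : 2 ≤ n) (hk : 2 ≤ k)
    (σ : List (Letter n) → List (Letter n))
    (hσ1 : ∀ u : List (Letter n), σ u = u ∨ σ u = wInv u)
    (hσ2 : ∀ u : List (Letter n), σ (wInv u) = σ u) :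
    (LinearMap.range (pOut n k σ - pIn n k σ) : Set (Mk n (k - 1)))
        = {v : Mk n (k - 1) | (2 : ℤ) ∣ ∑ ub : UW n (k - 1), v ub} ∧
    Nonempty ((Mk n (k - 1) ⧸ LinearMap.range (pOut n k σ - pIn n k σ)) ≃ₗ[ℤ] ZMod 2) := by
  have hrange := IsOrientationSection.range_pOut_sub_pIn ⟨hσ1, hσ2⟩ hn hk
  have : Nonempty (UW n (k - 1)) := UW.nonempty (by omega) (k - 1)
  refine ⟨?_, ⟨(Submodule.quotEquivOfEq _ _ hrange).trans
    ((parity _).quotKerEquivOfSurjective parity_surjective)⟩⟩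
  ext v
  rw [SetLike.mem_coe, hrange]
  exact mem_ker_parity
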